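/- arXiv:2510.16787 — 4 statements merged into one kernel-verified Lean document; each statement's English description precedes it below -/
import Mathlib

section
/- For a modular pseudometric w on X, the function d⁰_w(x,y) := inf{λ > 0 : w(λ,x,y) ≤ λ} is an extended pseudometric on X, i.e., d⁰_w(x,x) = 0, d⁰_w is symmetric, and d⁰_w(x,y) ≤ d⁰_w(x,z) + d⁰_w(z,y) for all x,y,z ∈ X. -/
open ENNReal

/-- The basic gauge `d⁰_w(x,y) = inf {λ > 0 : w(λ,x,y) ≤ λ}`, valued in `[0,∞]`. -/
noncomputable def dZero {X : Type*} (w : ℝ → X → X → ℝ≥0∞) (x y : X) : ℝ≥0∞ :=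
  ⨅ l ∈ {l : ℝ | 0 < l ∧ w l x y ≤ ENNReal.ofReal l}, ENNReal.ofReal l

lemma dZero_le_mem {X : Type*} (w : ℝ → X → X → ℝ≥0∞) {x y : X} {l : ℝ}
    (hl : 0 < l) (h : w l x y ≤ ENNReal.ofReal l) :
    dZero w x y ≤ ENNReal.ofReal l := by
  exact biInf_le (f := fun l => ENNReal.ofReal l) ⟨hl, h⟩

/-- For a modular pseudometric `w`, the gauge `d⁰_w` is an extended pseudometric. -/
theorem dZero_extended_pseudometric {X : Type*} (w : ℝ → X → X → ℝ≥0∞)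
    (hrefl : ∀ lam : ℝ, 0 < lam → ∀ x : X, w lam x x = 0)
    (hsymm : ∀ lam : ℝ, 0 < lam → ∀ x y : X, w lam x y = w lam y x)
    (htri : ∀ lam mu : ℝ, 0 < lam → 0 < mu → ∀ x y z : X,
      w (lam + mu) x y ≤ w lam x z + w mu z y) :
    (∀ x : X, dZero w x x = 0) ∧
    (∀ x y : X, dZero w x y = dZero w y x) ∧
    (∀ x y z : X, dZero w x y ≤ dZero w x z + dZero w z y) := by
  refine ⟨?_, ?_, ?_⟩
  · intro x
    refine le_antisymm ?_ zero_le
    refine ENNReal.le_of_forall_pos_le_add fun ε hε _ => ?_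
    have hε' : (0 : ℝ) < (ε : ℝ) := hε
    calc dZero w x x ≤ ENNReal.ofReal (ε : ℝ) :=
          dZero_le_mem w hε' (by simp [hrefl _ hε'])
      _ ≤ 0 + ε := by simp [ENNReal.ofReal_coe_nnreal]
  · intro x y
    have hset : {l : ℝ | 0 < l ∧ w l x y ≤ ENNReal.ofReal l}
        = {l : ℝ | 0 < l ∧ w l y x ≤ ENNReal.ofReal l} := by
      ext l
      simp only [Set.mem_setOf_eq]
      constructor
      · rintro ⟨hl, h⟩; exact ⟨hl, by rw [← hsymm l hl]; exact h⟩
      · rintro ⟨hl, h⟩; exact ⟨hl, by rw [hsymm l hl]; exact h⟩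
    unfold dZero
    rw [hset]
  · intro x y z
    have key : ∀ a ∈ {l : ℝ | 0 < l ∧ w l x z ≤ ENNReal.ofReal l},
        ∀ b ∈ {l : ℝ | 0 < l ∧ w l z y ≤ ENNReal.ofReal l},
        dZero w x y ≤ ENNReal.ofReal a + ENNReal.ofReal b := by
      rintro a ⟨ha, hwa⟩ b ⟨hb, hwb⟩
      have hab : 0 < a + b := by linarith
      have : w (a + b) x y ≤ ENNReal.ofReal (a + b) := by
        calc w (a + b) x y ≤ w a x z + w b z y := htri a b ha hb x y z
          _ ≤ ENNReal.ofReal a + ENNReal.ofReal b := add_le_add hwa hwb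
          _ = ENNReal.ofReal (a + b) := (ENNReal.ofReal_add ha.le hb.le).symm
      calc dZero w x y ≤ ENNReal.ofReal (a + b) := dZero_le_mem w hab this
        _ = ENNReal.ofReal a + ENNReal.ofReal b := ENNReal.ofReal_add ha.le hb.le
    unfold dZero
    rw [iInf_add]
    refine le_iInf fun a => ?_
    rw [iInf_add]
    refine le_iInf fun ha => ?_
    rw [ENNReal.add_iInf]
    refine le_iInf fun b => ?_
    rw [ENNReal.add_iInf]
    exact le_iInf fun hb => key a ha b hb
end

section
/- For a modular pseudometric w on X, the function d*_w(x,y) := inf{λ > 0 : w(λ,x,y) ≤ 1}, when w is additionally convex (w(λ+μ,x,y) ≤ (λ/(λ+μ))w(λ,x,z) + (μ/(λ+μ))w(μ,z,y)), is an extended pseudometric on X. -/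
open ENNReal

/-- The gauge `d*_w(x,y) = inf {λ > 0 : w(λ,x,y) ≤ 1}`, valued in `[0,∞]`. -/
noncomputable def dStar {X : Type*} (w : ℝ → X → X → ℝ≥0∞) (x y : X) : ℝ≥0∞ :=
  ⨅ l ∈ {l : ℝ | 0 < l ∧ w l x y ≤ 1}, ENNReal.ofReal l

/-- For a convex modular pseudometric `w`, the gauge `d*_w` is an extended pseudometric. -/
theorem dStar_extended_pseudometric {X : Type*} (w : ℝ → X → X → ℝ≥0∞)
    (hrefl : ∀ lam : ℝ, 0 < lam → ∀ x : X, w lam x x = 0)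
    (hsymm : ∀ lam : ℝ, 0 < lam → ∀ x y : X, w lam x y = w lam y x)
    (hconv : ∀ lam mu : ℝ, 0 < lam → 0 < mu → ∀ x y z : X,
      w (lam + mu) x y ≤
        ENNReal.ofReal (lam / (lam + mu)) * w lam x z +
        ENNReal.ofReal (mu / (lam + mu)) * w mu z y) :
    (∀ x : X, dStar w x x = 0) ∧
    (∀ x y : X, dStar w x y = dStar w y x) ∧
    (∀ x y z : X, dStar w x y ≤ dStar w x z + dStar w z y) := by
  refine ⟨?_, ?_, ?_⟩
  · intro x
    refine le_antisymm (ENNReal.le_of_forall_pos_le_add fun ε hε _ => ?_) (zero_le)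
    rw [zero_add]
    have hε' : (0 : ℝ) < (ε : ℝ) := by exact_mod_cast hε
    calc dStar w x x ≤ ENNReal.ofReal (ε : ℝ) :=
          biInf_le _ (show ((ε : ℝ)) ∈ {l : ℝ | 0 < l ∧ w l x x ≤ 1} from
            ⟨hε', by rw [hrefl _ hε']; exact zero_le⟩)
      _ = (ε : ℝ≥0∞) := ENNReal.ofReal_coe_nnreal
  · intro x y
    unfold dStar
    congr 1
    ext l
    by_cases hl : 0 < l
    · simp [hsymm l hl x y]
    · simp [Set.mem_setOf_eq, hl]
  · intro x y z
    -- key step: sum of members is a member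
    have key : ∀ a b : ℝ, 0 < a → 0 < b → w a x z ≤ 1 → w b z y ≤ 1 →
        dStar w x y ≤ ENNReal.ofReal a + ENNReal.ofReal b := by
      intro a b ha hb hwa hwb
      have hab : 0 < a + b := by linarith
      have hmem : w (a + b) x y ≤ 1 := by
        calc w (a + b) x y ≤ ENNReal.ofReal (a / (a + b)) * w a x z +
              ENNReal.ofReal (b / (a + b)) * w b z y := hconv a b ha hb x y z
          _ ≤ ENNReal.ofReal (a / (a + b)) * 1 + ENNReal.ofReal (b / (a + b)) * 1 := by
              gcongr
          _ = ENNReal.ofReal (a / (a + b) + b / (a + b)) := by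
              rw [mul_one, mul_one, ENNReal.ofReal_add (by positivity) (by positivity)]
          _ = 1 := by
              rw [← add_div, div_self hab.ne', ENNReal.ofReal_one]
      calc dStar w x y ≤ ENNReal.ofReal (a + b) :=
            biInf_le _ (show (a + b) ∈ {l : ℝ | 0 < l ∧ w l x y ≤ 1} from ⟨hab, hmem⟩)
        _ = ENNReal.ofReal a + ENNReal.ofReal b := ENNReal.ofReal_add ha.le hb.le
    have : dStar w x z + dStar w z y =
        ⨅ a ∈ {l : ℝ | 0 < l ∧ w l x z ≤ 1}, ⨅ b ∈ {l : ℝ | 0 < l ∧ w l z y ≤ 1},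
          (ENNReal.ofReal a + ENNReal.ofReal b) := by
      unfold dStar
      rw [ENNReal.iInf_add]
      refine iInf_congr fun a => ?_
      rw [ENNReal.iInf_add]
      refine iInf_congr fun ha => ?_
      rw [ENNReal.add_iInf]
      refine iInf_congr fun b => ?_
      rw [ENNReal.add_iInf]
    rw [this]
    exact le_iInf₂ fun a ha => le_iInf₂ fun b hb => key a b ha.1 hb.1 ha.2 hb.2
end

section
/- Let w be a convex modular pseudometric on X and let d⁰_w(x,y) = inf{λ>0 : w(λ,x,y) ≤ λ} and d*_w(x,y) = inf{λ>0 : w(λ,x,y) ≤ 1}. Then for all x,y with d*_w(x,y) < ∞, min{d*_w(x,y), √(d*_w(x,y))} ≤ d⁰_w(x,y) ≤ max{d*_w(x,y), √(d*_w(x,y))}. -/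
open ENNReal

/-- From convexity and reflexivity: `w` is nonincreasing in the parameter. -/
lemma w_mono {X : Type*} (w : ℝ → X → X → ℝ≥0∞)
    (hrefl : ∀ lam : ℝ, 0 < lam → ∀ x : X, w lam x x = 0)
    (hconv : ∀ lam mu : ℝ, 0 < lam → 0 < mu → ∀ x y z : X,
      w (lam + mu) x y ≤
        ENNReal.ofReal (lam / (lam + mu)) * w lam x z +
        ENNReal.ofReal (mu / (lam + mu)) * w mu z y) :
    ∀ mu lam : ℝ, 0 < mu → mu ≤ lam → ∀ x y : X, w lam x y ≤ w mu x y := by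
  intro mu lam hmu hle x y
  rcases eq_or_lt_of_le hle with rfl | hlt
  · exact le_rfl
  · have hd : 0 < lam - mu := by linarith
    have h := hconv mu (lam - mu) hmu hd x y y
    rw [hrefl _ hd, mul_zero, add_zero] at h
    have heq : mu + (lam - mu) = lam := by ring
    rw [heq] at h
    calc w lam x y ≤ ENNReal.ofReal (mu / lam) * w mu x y := h
      _ ≤ 1 * w mu x y := by
          gcongr
          apply ENNReal.ofReal_le_one.mpr
          rw [div_le_one (by linarith)]; linarith
      _ = w mu x y := one_mul _

/-- From convexity and reflexivity: `lam * w lam x y` is nonincreasing in `lam`. -/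
lemma w_mul_mono {X : Type*} (w : ℝ → X → X → ℝ≥0∞)
    (hrefl : ∀ lam : ℝ, 0 < lam → ∀ x : X, w lam x x = 0)
    (hconv : ∀ lam mu : ℝ, 0 < lam → 0 < mu → ∀ x y z : X,
      w (lam + mu) x y ≤
        ENNReal.ofReal (lam / (lam + mu)) * w lam x z +
        ENNReal.ofReal (mu / (lam + mu)) * w mu z y) :
    ∀ mu lam : ℝ, 0 < mu → mu ≤ lam → ∀ x y : X,
      ENNReal.ofReal lam * w lam x y ≤ ENNReal.ofReal mu * w mu x y := by
  intro mu lam hmu hle x y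
  rcases eq_or_lt_of_le hle with rfl | hlt
  · exact le_rfl
  · have hd : 0 < lam - mu := by linarith
    have hlam : 0 < lam := by linarith
    have h := hconv (lam - mu) mu hd hmu x y x
    rw [hrefl _ hd, mul_zero, zero_add] at h
    have heq : lam - mu + mu = lam := by ring
    rw [heq] at h
    calc ENNReal.ofReal lam * w lam x y
        ≤ ENNReal.ofReal lam * (ENNReal.ofReal (mu / lam) * w mu x y) := by gcongr
      _ = (ENNReal.ofReal lam * ENNReal.ofReal (mu / lam)) * w mu x y := by ring
      _ = ENNReal.ofReal mu * w mu x y := by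
          rw [← ENNReal.ofReal_mul hlam.le, mul_div_cancel₀ _ hlam.ne']

/-- Sandwich estimate between the two basic gauges of a convex modular pseudometric:
`min{d*, √d*} ≤ d⁰ ≤ max{d*, √d*}` whenever `d* < ∞`. -/
theorem dZero_dStar_sandwich {X : Type*} (w : ℝ → X → X → ℝ≥0∞)
    (hrefl : ∀ lam : ℝ, 0 < lam → ∀ x : X, w lam x x = 0)
    (hsymm : ∀ lam : ℝ, 0 < lam → ∀ x y : X, w lam x y = w lam y x)
    (hconv : ∀ lam mu : ℝ, 0 < lam → 0 < mu → ∀ x y z : X,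
      w (lam + mu) x y ≤
        ENNReal.ofReal (lam / (lam + mu)) * w lam x z +
        ENNReal.ofReal (mu / (lam + mu)) * w mu z y) :
    ∀ x y : X, dStar w x y ≠ ⊤ →
      min (dStar w x y) ((dStar w x y) ^ (1 / 2 : ℝ)) ≤ dZero w x y ∧
      dZero w x y ≤ max (dStar w x y) ((dStar w x y) ^ (1 / 2 : ℝ)) := by
  intro x y htop
  have hmono := w_mono w hrefl hconv
  have hmulmono := w_mul_mono w hrefl hconv
  constructor
  · -- lower bound
    apply le_iInf₂
    intro l hl
    obtain ⟨hl0, hwl⟩ := hl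
    rcases le_or_gt l 1 with h1 | h1
    · -- l ≤ 1 : w l x y ≤ ofReal l ≤ 1, so dStar ≤ ofReal l
      have hmem : dStar w x y ≤ ENNReal.ofReal l := by
        apply iInf₂_le_of_le l ⟨hl0, hwl.trans (ENNReal.ofReal_le_one.mpr h1)⟩ le_rfl
      exact le_trans (min_le_left _ _) hmem
    · -- l > 1 : w (l^2) ≤ 1, so dStar ≤ ofReal (l^2), hence sqrt dStar ≤ ofReal l
      have hl2 : 0 < l * l := by positivity
      have hlle : l ≤ l * l := by nlinarith
      have key : w (l * l) x y ≤ 1 := by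
        have h := hmulmono l (l * l) hl0 hlle x y
        have h2 : ENNReal.ofReal (l * l) * w (l * l) x y ≤ ENNReal.ofReal (l * l) * 1 := by
          calc ENNReal.ofReal (l * l) * w (l * l) x y
              ≤ ENNReal.ofReal l * w l x y := h
            _ ≤ ENNReal.ofReal l * ENNReal.ofReal l := by gcongr
            _ = ENNReal.ofReal (l * l) * 1 := by
                rw [mul_one, ← ENNReal.ofReal_mul hl0.le]
        exact (ENNReal.mul_le_mul_iff_right (by simp [hl2]) (by simp)).mp h2
      have hstar : dStar w x y ≤ ENNReal.ofReal (l * l) :=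
        iInf₂_le_of_le (l * l) ⟨hl2, key⟩ le_rfl
      have hsq : (dStar w x y) ^ (1 / 2 : ℝ) ≤ ENNReal.ofReal l := by
        calc (dStar w x y) ^ (1 / 2 : ℝ)
            ≤ (ENNReal.ofReal (l * l)) ^ (1 / 2 : ℝ) :=
              ENNReal.rpow_le_rpow hstar (by norm_num)
          _ = ENNReal.ofReal ((l * l) ^ (1 / 2 : ℝ)) := by
              rw [← ENNReal.ofReal_rpow_of_pos hl2]
          _ = ENNReal.ofReal l := by
              congr 1
              rw [show l * l = l ^ (2 : ℕ) by ring, ← Real.rpow_natCast l 2,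
                ← Real.rpow_mul hl0.le]
              norm_num
      exact le_trans (min_le_right _ _) hsq
  · -- upper bound
    set M := max (dStar w x y) ((dStar w x y) ^ (1 / 2 : ℝ)) with hM
    have hMtop : M ≠ ⊤ := by
      rw [hM]
      simp only [ne_eq, max_eq_top, not_or]
      exact ⟨htop, by
        rw [ENNReal.rpow_eq_top_iff]
        push_neg
        constructor
        · intro _; norm_num
        · intro h; exact absurd h htop⟩
    refine le_of_forall_gt_imp_ge_of_dense ?_
    intro c hc
    obtain ⟨r, hr0, hMr, hrc⟩ := ENNReal.lt_iff_exists_real_btwn.mp hc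
    have hrpos : 0 < r := by
      by_contra h
      push_neg at h
      rw [ENNReal.ofReal_eq_zero.mpr h] at hMr
      exact absurd hMr (by simp)
    -- dStar < ofReal r and dStar < ofReal (r * r)
    have hdr : dStar w x y < ENNReal.ofReal r := lt_of_le_of_lt (le_max_left _ _) hMr
    have hdr2 : dStar w x y < ENNReal.ofReal (r * r) := by
      have hs : (dStar w x y) ^ (1 / 2 : ℝ) < ENNReal.ofReal r :=
        lt_of_le_of_lt (le_max_right _ _) hMr
      have : ((dStar w x y) ^ (1 / 2 : ℝ)) ^ (2 : ℝ) < (ENNReal.ofReal r) ^ (2 : ℝ) := by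
        apply ENNReal.rpow_lt_rpow hs (by norm_num)
      rwa [← ENNReal.rpow_mul, show (1 / 2 : ℝ) * 2 = 1 by norm_num, ENNReal.rpow_one,
        ENNReal.ofReal_rpow_of_pos hrpos,
        show r ^ (2 : ℝ) = r * r by
          rw [show (2:ℝ) = ((2:ℕ):ℝ) by norm_num, Real.rpow_natCast]; ring] at this
    -- extract witnesses
    have hmin : dStar w x y < min (ENNReal.ofReal r) (ENNReal.ofReal (r * r)) :=
      lt_min hdr hdr2
    rw [dStar, iInf_lt_iff] at hmin
    obtain ⟨m, hm⟩ := hmin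
    rw [iInf_lt_iff] at hm
    obtain ⟨⟨hm0, hwm⟩, hmlt⟩ := hm
    have hmr : m < r := by
      have := lt_of_lt_of_le hmlt (min_le_left _ _)
      exact (ENNReal.ofReal_lt_ofReal_iff hrpos).mp this
    have hmr2 : m < r * r := by
      have := lt_of_lt_of_le hmlt (min_le_right _ _)
      exact (ENNReal.ofReal_lt_ofReal_iff (by positivity)).mp this
    -- show w r x y ≤ ofReal r
    have key : w r x y ≤ ENNReal.ofReal r := by
      rcases le_or_gt 1 r with h1 | h1
      · calc w r x y ≤ w m x y := hmono m r hm0 hmr.le x y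
          _ ≤ 1 := hwm
          _ ≤ ENNReal.ofReal r := by
              rw [← ENNReal.ofReal_one]; exact ENNReal.ofReal_le_ofReal h1
      · have h2 : ENNReal.ofReal r * w r x y ≤ ENNReal.ofReal r * ENNReal.ofReal r := by
          calc ENNReal.ofReal r * w r x y
              ≤ ENNReal.ofReal m * w m x y := hmulmono m r hm0 hmr.le x y
            _ ≤ ENNReal.ofReal m * 1 := by gcongr
            _ = ENNReal.ofReal m := mul_one _
            _ ≤ ENNReal.ofReal (r * r) := ENNReal.ofReal_le_ofReal hmr2.le
            _ = ENNReal.ofReal r * ENNReal.ofReal r := ENNReal.ofReal_mul hrpos.le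
        exact (ENNReal.mul_le_mul_iff_right (by simp [hrpos]) (by simp)).mp h2
    have : dZero w x y ≤ ENNReal.ofReal r :=
      iInf₂_le_of_le r ⟨hrpos, key⟩ le_rfl
    exact this.trans hrc.le
end

section
/- Let w be a modular pseudometric on X with modular set X*_w, and V_n := {(x,y) : w(1/n,x,y) < 1/n}. Then the family {V_n : n ∈ ℕ} is a base for a uniformity 𝒱 on X*_w: each V_n contains the diagonal, is symmetric, the family is downward directed (V_{max(m,n)} ⊆ V_m ∩ V_n when w(λ,x,y) is antitone in λ, e.g., for convex w), and each V_n admits V_{2n} with V_{2n} ∘ V_{2n} ⊆ V_n. -/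
open ENNReal

def modularSet {X : Type*} (w : ℝ → X → X → ℝ≥0∞) (x0 : X) : Set X :=
  {x | ∃ lam : ℝ, 0 < lam ∧ w lam x x0 ≠ ⊤}

def entourageV {X : Type*} (w : ℝ → X → X → ℝ≥0∞) (Xw : Set X) (n : ℕ) : Set (X × X) :=
  {p | p.1 ∈ Xw ∧ p.2 ∈ Xw ∧ w (1 / (n : ℝ)) p.1 p.2 < 1 / (n : ℝ≥0∞)}

/-- Antitonicity of a convex modular in the parameter. -/
lemma w_antitone {X : Type*} (w : ℝ → X → X → ℝ≥0∞)
    (hrefl : ∀ lam : ℝ, 0 < lam → ∀ x : X, w lam x x = 0)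
    (hconv : ∀ lam mu : ℝ, 0 < lam → 0 < mu → ∀ x y z : X,
      w (lam + mu) x y ≤
        ENNReal.ofReal (lam / (lam + mu)) * w lam x z +
        ENNReal.ofReal (mu / (lam + mu)) * w mu z y)
    {lam lam' : ℝ} (hl : 0 < lam) (hle : lam ≤ lam') (x y : X) :
    w lam' x y ≤ w lam x y := by
  rcases eq_or_lt_of_le hle with h | h
  · rw [h]
  · have hmu : 0 < lam' - lam := by linarith
    have := hconv lam (lam' - lam) hl hmu x y y
    rw [hrefl _ hmu y] at this
    simp only [mul_zero, add_zero] at this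
    have h1 : lam + (lam' - lam) = lam' := by ring
    rw [h1] at this
    calc w lam' x y ≤ ENNReal.ofReal (lam / lam') * w lam x y := this
      _ ≤ 1 * w lam x y := by
          gcongr
          rw [show (1 : ℝ≥0∞) = ENNReal.ofReal 1 by simp]
          apply ENNReal.ofReal_le_ofReal
          rw [div_le_one (by linarith)]; linarith
      _ = w lam x y := one_mul _

/-- The family `{V_n}` is a base for a uniformity on `X*_w`: each `V_n` contains the
diagonal, is symmetric, the family is downward directed, and `V_{2n} ∘ V_{2n} ⊆ V_n`. -/
theorem entourages_uniformity_base {X : Type*} (w : ℝ → X → X → ℝ≥0∞) (x0 : X)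
    (hrefl : ∀ lam : ℝ, 0 < lam → ∀ x : X, w lam x x = 0)
    (hsymm : ∀ lam : ℝ, 0 < lam → ∀ x y : X, w lam x y = w lam y x)
    (hconv : ∀ lam mu : ℝ, 0 < lam → 0 < mu → ∀ x y z : X,
      w (lam + mu) x y ≤
        ENNReal.ofReal (lam / (lam + mu)) * w lam x z +
        ENNReal.ofReal (mu / (lam + mu)) * w mu z y) :
    (∀ n : ℕ, 0 < n → ∀ x ∈ modularSet w x0, (x, x) ∈ entourageV w (modularSet w x0) n) ∧
    (∀ n : ℕ, 0 < n → ∀ x y : X,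
      (x, y) ∈ entourageV w (modularSet w x0) n → (y, x) ∈ entourageV w (modularSet w x0) n) ∧
    (∀ m n : ℕ, 0 < m → 0 < n →
      entourageV w (modularSet w x0) (max m n) ⊆
        entourageV w (modularSet w x0) m ∩ entourageV w (modularSet w x0) n) ∧
    (∀ n : ℕ, 0 < n → ∀ x z : X,
      (∃ y : X, (x, y) ∈ entourageV w (modularSet w x0) (2 * n) ∧
                (y, z) ∈ entourageV w (modularSet w x0) (2 * n)) →
      (x, z) ∈ entourageV w (modularSet w x0) n) := by
  refine ⟨?_, ?_, ?_, ?_⟩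
  · intro n hn x hx
    refine ⟨hx, hx, ?_⟩
    rw [hrefl _ (by positivity) x]
    exact ENNReal.div_pos one_ne_zero (by simp)
  · intro n hn x y ⟨hx, hy, hw⟩
    refine ⟨hy, hx, ?_⟩
    rwa [hsymm _ (by positivity) y x]
  · intro m n hm hn p ⟨hx, hy, hw⟩
    have key : ∀ k : ℕ, 0 < k → k ≤ max m n →
        p ∈ entourageV w (modularSet w x0) k := by
      intro k hk hkle
      refine ⟨hx, hy, ?_⟩
      have h1 : (1 : ℝ) / (max m n : ℝ) ≤ 1 / (k : ℝ) := by
        apply one_div_le_one_div_of_le (by positivity)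
        exact_mod_cast hkle
      have h2 : w (1 / (k : ℝ)) p.1 p.2 ≤ w (1 / ((max m n : ℕ) : ℝ)) p.1 p.2 :=
        w_antitone w hrefl hconv (by positivity) (by exact_mod_cast h1) _ _
      have h3 : (1 : ℝ≥0∞) / ((max m n : ℕ) : ℝ≥0∞) ≤ 1 / (k : ℝ≥0∞) := by
        gcongr
      exact lt_of_le_of_lt h2 (lt_of_lt_of_le hw h3)
    exact ⟨key m hm (le_max_left m n), key n hn (le_max_right m n)⟩
  · intro n hn x z ⟨y, ⟨hx, hy, hw1⟩, ⟨_, hz, hw2⟩⟩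
    refine ⟨hx, hz, ?_⟩
    have hn' : (0:ℝ) < n := by positivity
    have h2n : (0:ℝ) < 1 / (2*n : ℝ) := by positivity
    have hconv' := hconv (1/(2*n:ℝ)) (1/(2*n:ℝ)) h2n h2n x z y
    have hsum : (1:ℝ)/(2*n) + 1/(2*n) = 1/n := by
      field_simp
      norm_num
    have hcoef : (1:ℝ)/(2*n) / ((1:ℝ)/(2*n) + 1/(2*n)) = 1/2 := by
      rw [hsum]
      field_simp
    rw [hcoef, hsum] at hconv'
    have hcast : ((2*n : ℕ) : ℝ) = 2*(n:ℝ) := by push_cast; ring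
    rw [hcast] at hw1 hw2
    have hbound : ENNReal.ofReal (1/2) * w (1/(2*(n:ℝ))) x y +
        ENNReal.ofReal (1/2) * w (1/(2*(n:ℝ))) y z <
        ENNReal.ofReal (1/2) * (1 / ((2*n : ℕ) : ℝ≥0∞)) +
        ENNReal.ofReal (1/2) * (1 / ((2*n : ℕ) : ℝ≥0∞)) := by
      have hhalf : ENNReal.ofReal (1/2) ≠ 0 := by
        simp [ENNReal.ofReal_eq_zero]
      have hhalf' : ENNReal.ofReal (1/2) ≠ ⊤ := ENNReal.ofReal_ne_top
      exact ENNReal.add_lt_add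
        (ENNReal.mul_lt_mul_iff_right hhalf hhalf' |>.mpr hw1)
        (ENNReal.mul_lt_mul_iff_right hhalf hhalf' |>.mpr hw2)
    have hhalf2 : ENNReal.ofReal ((1:ℝ)/2) = 1/2 := by
      rw [ENNReal.ofReal_div_of_pos (by norm_num)]
      norm_num
    have heq : ENNReal.ofReal (1/2) * (1 / ((2*n : ℕ) : ℝ≥0∞)) +
        ENNReal.ofReal (1/2) * (1 / ((2*n : ℕ) : ℝ≥0∞)) = 1 / ((2*n : ℕ) : ℝ≥0∞) := by
      rw [hhalf2, ← two_mul, ← mul_assoc]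
      norm_num
      rw [ENNReal.mul_inv_cancel (by norm_num) (by norm_num), one_mul]
    have hle : (1 : ℝ≥0∞) / ((2*n : ℕ) : ℝ≥0∞) ≤ 1 / (n : ℝ≥0∞) := by
      gcongr
      exact_mod_cast Nat.le_mul_of_pos_left n (by norm_num)
    show w (1/(n:ℝ)) x z < 1/(n:ℝ≥0∞)
    calc w (1/(n:ℝ)) x z ≤ _ := hconv'
      _ < _ := hbound
      _ = 1 / ((2*n : ℕ) : ℝ≥0∞) := heq
      _ ≤ 1 / (n : ℝ≥0∞) := hle
end
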